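/- Let (M, D, Π, (−)⁻¹) be a partial group. Then the set of locally finite subgroups of M, partially ordered by inclusion, is nonempty (it contains the trivial subgroup {1}) and has a maximal element. -/

import Mathlib

set_option linter.unusedSectionVars false

open Monoid

namespace PaperPG

/-! ### Generic notions: letters, reduced / cyclically reduced words, reduced forms -/

section Letters

variable {ι : Type*} (H : ι → Type*) [∀ i, Group (H i)]

/-- A letter: a vertex/index together with an element of the corresponding group. -/
abbrev Ltr : Type _ := (i : ι) × H i

/-- A (combinatorially) reduced word: all letters are non-identity and adjacent letters
belong to distinct factors. -/
def IsRed (l : List (Ltr H)) : Prop :=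
  (∀ x ∈ l, x.2 ≠ 1) ∧ l.Chain' fun a b => a.1 ≠ b.1

/-- A cyclically reduced word: reduced, and if it has length at least `2`, its first and last
letters belong to distinct factors. -/
def IsCycRed (l : List (Ltr H)) : Prop :=
  IsRed H l ∧ ∀ a ∈ l.head?, ∀ b ∈ l.getLast?, 2 ≤ l.length → a.1 ≠ b.1

theorem isRed_nil : IsRed H ([] : List (Ltr H)) := by
  constructor <;> first | exact List.isChain_nil | simp

theorem isCycRed_nil : IsCycRed H ([] : List (Ltr H)) := by
  refine ⟨isRed_nil H, ?_⟩
  simp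

theorem isCycRed_single (x : Ltr H) (hx : x.2 ≠ 1) : IsCycRed H [x] := by
  refine ⟨⟨by simpa using hx, List.isChain_singleton _⟩, ?_⟩
  simp

variable [DecidableEq ι] [∀ i, DecidableEq (H i)]

/-- The element of the free product `∗_{i} H i` determined by a word. -/
noncomputable def listProd (l : List (Ltr H)) : CoprodI H :=
  (l.map fun x => CoprodI.of x.2).prod

/-- The reduced form of a word: the unique reduced word representing the product of its
letters in the free product `∗_i H i`. -/
noncomputable def red (l : List (Ltr H)) : List (Ltr H) :=
  (CoprodI.Word.equiv (listProd H l)).toList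

/-- The set of indices (vertices) occurring in a word. -/
def verts (l : List (Ltr H)) : Set ι := {i | ∃ x ∈ l, x.1 = i}

/-- The formal inverse of a word: invert every letter and reverse. -/
def rawInv (l : List (Ltr H)) : List (Ltr H) :=
  (l.map fun x => (⟨x.1, x.2⁻¹⟩ : Ltr H)).reverse

end Letters

/-! ### Homomorphisms of (the underlying data of) partial groups -/

/-- `f` is a homomorphism of partial groups, from the partial group with domain `D₁` and
product `P₁` to the one with domain `D₂` and product `P₂`. -/
def IsHom {M N : Type*} (D₁ : Set (List M)) (P₁ : List M → M)
    (D₂ : Set (List N)) (P₂ : List N → N) (f : M → N) : Prop :=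
  (∀ u ∈ D₁, u.map f ∈ D₂) ∧ ∀ u ∈ D₁, P₂ (u.map f) = f (P₁ u)

theorem isHom_id {M : Type*} (D : Set (List M)) (P : List M → M) : IsHom D P D P id := by
  constructor <;> intro u hu <;> simp [hu]

theorem IsHom.comp {M₁ M₂ M₃ : Type*} {D₁ : Set (List M₁)} {P₁ : List M₁ → M₁}
    {D₂ : Set (List M₂)} {P₂ : List M₂ → M₂} {D₃ : Set (List M₃)} {P₃ : List M₃ → M₃}
    {g : M₂ → M₃} {f : M₁ → M₂} (hg : IsHom D₂ P₂ D₃ P₃ g) (hf : IsHom D₁ P₁ D₂ P₂ f) :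
    IsHom D₁ P₁ D₃ P₃ (g ∘ f) := by
  refine ⟨fun u hu => ?_, fun u hu => ?_⟩
  · rw [← List.map_map]
    exact hg.1 _ (hf.1 u hu)
  · rw [← List.map_map, hg.2 _ (hf.1 u hu), hf.2 u hu]
    rfl

/-! ### The partial group `M(G, H)` associated to a decorated graph -/

section Graph

variable {ι : Type*} (H : ι → Type*) [∀ i, Group (H i)]
  [DecidableEq ι] [∀ i, DecidableEq (H i)] (G : SimpleGraph ι)

/-- Membership in `M(G,H)`: a cyclically reduced word whose set of vertices is a clique. -/
def Mem (l : List (Ltr H)) : Prop := IsCycRed H l ∧ G.IsClique (verts H l)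

theorem mem_nil : Mem H G [] := by
  refine ⟨isCycRed_nil H, ?_⟩
  simp [verts, SimpleGraph.isClique_iff, Set.Pairwise]

theorem mem_single (v : ι) (h : H v) (hne : h ≠ 1) : Mem H G [⟨v, h⟩] := by
  refine ⟨isCycRed_single H _ hne, ?_⟩
  simp only [verts, SimpleGraph.isClique_iff, Set.Pairwise, List.mem_singleton]
  rintro a ⟨x, hx, rfl⟩ b ⟨y, hy, rfl⟩ hne'
  subst hx; subst hy
  exact absurd rfl hne'

/-- A word with letters elements of `M(G,H)` is in the domain `D(G,H)` iff all its letters are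
elements of `M(G,H)`, all occurring vertices lie in a common clique, and the reduced form of
any subproduct `u_i ⋯ u_j` is cyclically reduced. -/
def InD (W : List (List (Ltr H))) : Prop :=
  (∀ u ∈ W, Mem H G u) ∧
  G.IsClique {i | ∃ u ∈ W, i ∈ verts H u} ∧
  ∀ i j : ℕ, i ≤ j → j < W.length →
    IsCycRed H (red H (((W.drop i).take (j + 1 - i)).flatten))

/-- The underlying set of the partial group `M(G,H)`. -/
def Carrier : Type _ := {l : List (Ltr H) // Mem H G l}

/-- The domain of the partial group `M(G,H)`. -/
def pgD : Set (List (Carrier H G)) := {W | InD H G (W.map Subtype.val)}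

/-- The unit of the partial group `M(G,H)`: the empty word. -/
def one : Carrier H G := ⟨[], mem_nil H G⟩

/-- The product map of the partial group `M(G,H)`: the reduced form of the concatenation
(junk value `1` outside of the domain). -/
noncomputable def pgPi (W : List (Carrier H G)) : Carrier H G := by
  classical exact if h : Mem H G (red H (W.map Subtype.val).flatten) then ⟨_, h⟩ else one H G

/-- The inversion of the partial group `M(G,H)` (junk value `1` if the result were not a
member, which never happens). -/
noncomputable def invCar (x : Carrier H G) : Carrier H G := by
  classical exact if h : Mem H G (rawInv H x.val) then ⟨_, h⟩ else one H G

/-- The subset `H̃ᵥ` of `M(G,H)`: the empty word together with the one-letter words with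
letter a nontrivial element of `H v`. -/
def Htilde (v : ι) : Set (Carrier H G) :=
  {x | x.val = [] ∨ ∃ h : H v, h ≠ 1 ∧ x.val = [⟨v, h⟩]}

end Graph

/-! ### Induced maps -/

section Induced

variable {ι ι' : Type*} (H : ι → Type*) [∀ i, Group (H i)]
  [DecidableEq ι] [∀ i, DecidableEq (H i)] (G : SimpleGraph ι)
  (H' : ι' → Type*) [∀ i, Group (H' i)]
  [DecidableEq ι'] [∀ i, DecidableEq (H' i)] (G' : SimpleGraph ι')

/-- The letterwise map on words induced by a map of vertices `fG` and group homomorphisms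
`fH v : H v →* H' (fG v)`. -/
def rawInduced (fG : ι → ι') (fH : ∀ i, H i →* H' (fG i)) (l : List (Ltr H)) :
    List (Ltr H') :=
  l.map fun x => ⟨fG x.1, fH x.1 x.2⟩

/-- The map `M(f_G, {f_v}) : M(G,H) → M(G',H')` (junk value `1` if the image word were not a
member; this never happens when the `fH v` are injective). -/
noncomputable def inducedCar (fG : ι → ι') (fH : ∀ i, H i →* H' (fG i))
    (x : Carrier H G) : Carrier H' G' := by
  classical exact if h : Mem H' G' (rawInduced H H' fG fH x.val) then ⟨_, h⟩ else one H' G'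

/-- A homomorphism of partial groups `M(G,H) → M(G',H')` has torsion-free kernel if the only
element of finite order (as an element of the ambient free product) sent to `1` is `1`. -/
def TFKer (f : Carrier H G → Carrier H' G') : Prop :=
  ∀ x : Carrier H G, f x = one H' G' → IsOfFinOrder (listProd H x.val) → x = one H G

end Induced

/-! ### Automorphism groups -/

section Aut

variable {ι : Type*} (H : ι → Type*) [∀ i, Group (H i)]
  [DecidableEq ι] [∀ i, DecidableEq (H i)] (G : SimpleGraph ι)

/-- The automorphism group of the partial group `M(G,H)`, as a subgroup of the permutation
group of its carrier: bijections that are homomorphisms in both directions. -/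
noncomputable def pgAut : Subgroup (Equiv.Perm (Carrier H G)) where
  carrier := {f | IsHom (pgD H G) (pgPi H G) (pgD H G) (pgPi H G) f ∧
    IsHom (pgD H G) (pgPi H G) (pgD H G) (pgPi H G) f.symm}
  one_mem' := ⟨isHom_id _ _, isHom_id _ _⟩
  mul_mem' := by
    rintro f g ⟨hf, hf'⟩ ⟨hg, hg'⟩
    exact ⟨hf.comp hg, hg'.comp hf'⟩
  inv_mem' := by
    rintro f ⟨hf, hf'⟩
    exact ⟨hf', hf⟩

/-- The automorphism group of a simple graph, as a subgroup of the permutation group of its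
vertices: bijections such that both the map and its inverse send edges to edges. -/
def graphAut : Subgroup (Equiv.Perm ι) where
  carrier := {σ | (∀ a b, G.Adj a b → G.Adj (σ a) (σ b)) ∧
    (∀ a b, G.Adj a b → G.Adj (σ.symm a) (σ.symm b))}
  one_mem' := ⟨fun a b h => h, fun a b h => h⟩
  mul_mem' := by
    rintro f g ⟨hf, hf'⟩ ⟨hg, hg'⟩
    exact ⟨fun a b h => hf _ _ (hg _ _ h), fun a b h => hg' _ _ (hf' _ _ h)⟩
  inv_mem' := by
    rintro f ⟨hf, hf'⟩
    exact ⟨hf', hf⟩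

/-- An automorphism `f` of `M(G,H)` covers the vertex map `σ` if for every vertex `v`,
`f` sends the nontrivial elements of `H̃ᵥ` into `H̃_{σ v}`. -/
def CoversVia (f : Carrier H G → Carrier H G) (σ : ι → ι) : Prop :=
  ∀ (v : ι) (h : H v) (hne : h ≠ 1),
    ∃ h' : H (σ v), h' ≠ 1 ∧ (f ⟨[⟨v, h⟩], mem_single H G v h hne⟩).val = [⟨σ v, h'⟩]

end Aut

/-! ### Subgroups and locally finite subgroups of partial groups -/

/-- A subset `N` is a subgroup of the partial group with data `(D, P, inv)`: it is closed
under inversion, every word with letters in `N` is in the domain `D`, and `P` maps such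
words into `N`. -/
def IsSubgroupOf {M : Type*} (D : Set (List M)) (P : List M → M) (inv : M → M)
    (N : Set M) : Prop :=
  (∀ x ∈ N, inv x ∈ N) ∧ ∀ W : List M, (∀ u ∈ W, u ∈ N) → W ∈ D ∧ P W ∈ N

/-- A subgroup `N` of a partial group is locally finite: every finite subset of `N` is
contained in a finite subgroup contained in `N` (i.e. every finitely generated subgroup of the
group `N` is finite). -/
def IsLocFinSubgroupOf {M : Type*} (D : Set (List M)) (P : List M → M) (inv : M → M)
    (N : Set M) : Prop :=
  IsSubgroupOf D P inv N ∧
    ∀ S : Set M, S ⊆ N → S.Finite →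
      ∃ K : Set M, S ⊆ K ∧ K ⊆ N ∧ IsSubgroupOf D P inv K ∧ K.Finite

end PaperPG
namespace PaperPG

universe u

/-- A bundled partial group: a set with a domain of definition, a product, and an inversion
satisfying the axioms (D1), (D2), (P1), (P2), (P3), with involutive inversion. -/
structure PartialGroupCat : Type (u + 1) where
  carrier : Type u
  D : Set (List carrier)
  pi : List carrier → carrier
  inv : carrier → carrier
  /-- (D1) -/
  single_mem : ∀ x : carrier, [x] ∈ D
  /-- (D2), left part -/
  append_left_mem : ∀ {u v : List carrier}, u ++ v ∈ D → u ∈ D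
  /-- (D2), right part -/
  append_right_mem : ∀ {u v : List carrier}, u ++ v ∈ D → v ∈ D
  /-- (P1) -/
  pi_single : ∀ x : carrier, pi [x] = x
  /-- (P2), membership part -/
  assoc_mem : ∀ {u v w : List carrier}, u ++ v ++ w ∈ D → u ++ [pi v] ++ w ∈ D
  /-- (P2), product part -/
  pi_assoc : ∀ {u v w : List carrier}, u ++ v ++ w ∈ D →
    pi (u ++ v ++ w) = pi (u ++ [pi v] ++ w)
  /-- inversion is an involution -/
  inv_inv : ∀ x : carrier, inv (inv x) = x
  /-- (P3), membership part -/
  invWord_append_mem : ∀ {u : List carrier}, u ∈ D → (u.map inv).reverse ++ u ∈ D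
  /-- (P3), product part: `Π(u⁻¹ ∘ u) = 1 = Π(∅)` -/
  pi_invWord_append : ∀ {u : List carrier}, u ∈ D → pi ((u.map inv).reverse ++ u) = pi []

namespace PartialGroupCat

/-- The automorphism group of a partial group, as a subgroup of the permutation group of
its carrier: the bijections that are homomorphisms in both directions. -/
def aut (M : PartialGroupCat) : Subgroup (Equiv.Perm M.carrier) where
  carrier := {f | IsHom M.D M.pi M.D M.pi f ∧ IsHom M.D M.pi M.D M.pi f.symm}
  one_mem' := ⟨isHom_id _ _, isHom_id _ _⟩
  mul_mem' := by
    rintro f g ⟨hf, hf'⟩ ⟨hg, hg'⟩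
    exact ⟨hf.comp hg, hg'.comp hf'⟩
  inv_mem' := by
    rintro f ⟨hf, hf'⟩
    exact ⟨hf', hf⟩

/-- `f` is an isomorphism of partial groups from `M₁` to `M₂`: a homomorphism which is
bijective with inverse also a homomorphism. -/
def IsIso (M₁ M₂ : PartialGroupCat) (f : M₁.carrier → M₂.carrier) : Prop :=
  IsHom M₁.D M₁.pi M₂.D M₂.pi f ∧
    ∃ g : M₂.carrier → M₁.carrier, IsHom M₂.D M₂.pi M₁.D M₁.pi g ∧
      Function.LeftInverse g f ∧ Function.RightInverse g f

end PartialGroupCat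

end PaperPG

namespace PaperPG

theorem PartialGroupCat.nil_mem (M : PartialGroupCat) : ([] : List M.carrier) ∈ M.D :=
  M.append_left_mem (u := []) (v := [M.pi []]) (by simpa using M.single_mem _)

theorem PartialGroupCat.ones_word (M : PartialGroupCat) (W : List M.carrier)
    (h : ∀ u ∈ W, u = M.pi []) : W ∈ M.D ∧ M.pi W = M.pi [] := by
  induction W with
  | nil => exact ⟨M.nil_mem, rfl⟩
  | cons a W ih =>
    obtain ⟨hW, hpi⟩ := ih fun u hu => h u (List.mem_cons_of_mem _ hu)
    have ha := h a (List.mem_cons_self)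
    subst ha
    have h1 : ([] : List M.carrier) ++ [] ++ W ∈ M.D := by simpa using hW
    have h2 := M.assoc_mem h1
    have h3 := M.pi_assoc h1
    simp only [List.nil_append, List.singleton_append] at h2 h3
    exact ⟨h2, h3.symm.trans hpi⟩

theorem PartialGroupCat.inv_one (M : PartialGroupCat) : M.inv (M.pi []) = M.pi [] := by
  set o := M.pi [] with ho
  have hmem : [M.inv o] ++ [] ++ [] ∈ M.D := by simpa using M.single_mem (M.inv o)
  have h1 := M.pi_assoc hmem
  simp only [List.append_nil, List.singleton_append] at h1
  rw [← ho] at h1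
  -- h1 : pi [inv o] = pi [inv o, o]
  have h2 := M.pi_invWord_append (M.single_mem o)
  simp only [List.map_cons, List.map_nil, List.reverse_cons, List.reverse_nil,
    List.nil_append, List.singleton_append] at h2
  -- h2 : pi [inv o, o] = pi []
  have := h1.trans h2
  rwa [M.pi_single] at this

theorem chain_bound {α : Type*} {c : Set (Set α)} (hc : IsChain (· ⊆ ·) c)
    (hne : c.Nonempty) {S : Set α} (hS : S.Finite) :
    S ⊆ ⋃₀ c → ∃ N ∈ c, S ⊆ N := by
  refine Set.Finite.induction_on (motive := fun s _ => s ⊆ ⋃₀ c → ∃ N ∈ c, s ⊆ N) S hS ?_ ?_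
  · intro _
    exact ⟨hne.choose, hne.choose_spec, by simp⟩
  · intro a s _ _ ih hsub
    obtain ⟨N, hN, hsN⟩ := ih fun x hx => hsub (Set.mem_insert_of_mem _ hx)
    obtain ⟨N', hN', haN'⟩ := hsub (Set.mem_insert _ _)
    rcases eq_or_ne N N' with rfl | hNN'
    · exact ⟨N, hN, Set.insert_subset haN' hsN⟩
    rcases hc hN hN' hNN' with h | h
    · exact ⟨N', hN', Set.insert_subset haN' (hsN.trans h)⟩
    · exact ⟨N, hN, Set.insert_subset (h haN') hsN⟩

/-- In any partial group, the poset of locally finite subgroups (ordered by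
inclusion) is nonempty — it contains the trivial subgroup `{1}` — and has a maximal
element. -/
theorem statement13 (M : PartialGroupCat) :
    IsLocFinSubgroupOf M.D M.pi M.inv {x : M.carrier | x = M.pi []} ∧
    ∃ N : Set M.carrier, IsLocFinSubgroupOf M.D M.pi M.inv N ∧
      ∀ K : Set M.carrier, IsLocFinSubgroupOf M.D M.pi M.inv K → N ⊆ K → K = N := by
  have htriv : IsLocFinSubgroupOf M.D M.pi M.inv {x : M.carrier | x = M.pi []} := by
    have hsub : IsSubgroupOf M.D M.pi M.inv {x : M.carrier | x = M.pi []} := by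
      constructor
      · rintro x hx
        simp only [Set.mem_setOf_eq] at hx ⊢
        rw [hx, M.inv_one]
      · intro W hW
        exact M.ones_word W hW
    refine ⟨hsub, fun S hS _ => ⟨{x : M.carrier | x = M.pi []}, hS, le_refl _, hsub, ?_⟩⟩
    have : {x : M.carrier | x = M.pi []} = {M.pi []} := by ext x; simp
    rw [this]
    exact Set.finite_singleton _
  refine ⟨htriv, ?_⟩
  set S : Set (Set M.carrier) := {N | IsLocFinSubgroupOf M.D M.pi M.inv N} with hSdef
  have hzorn : ∀ c ⊆ S, IsChain (· ⊆ ·) c → c.Nonempty →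
      ∃ ub ∈ S, ∀ s ∈ c, s ⊆ ub := by
    intro c hcS hchain hcne
    refine ⟨⋃₀ c, ?_, fun s hs => Set.subset_sUnion_of_mem hs⟩
    have hubsub : IsSubgroupOf M.D M.pi M.inv (⋃₀ c) := by
      constructor
      · rintro x ⟨N, hN, hx⟩
        exact ⟨N, hN, ((hcS hN).1).1 x hx⟩
      · intro W hW
        have hrange : Set.range W.get ⊆ ⋃₀ c := by
          rintro x ⟨i, rfl⟩
          exact hW _ (List.get_mem W i)
        obtain ⟨N, hN, hWN⟩ := chain_bound hchain hcne (Set.finite_range W.get) hrange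
        have hWN' : ∀ u ∈ W, u ∈ N := by
          intro u hu
          obtain ⟨i, rfl⟩ := List.get_of_mem hu
          exact hWN ⟨i, rfl⟩
        obtain ⟨h1, h2⟩ := ((hcS hN).1).2 W hWN'
        exact ⟨h1, N, hN, h2⟩
    refine ⟨hubsub, fun T hT hTfin => ?_⟩
    obtain ⟨N, hN, hTN⟩ := chain_bound hchain hcne hTfin hT
    obtain ⟨K, hTK, hKN, hKsub, hKfin⟩ := (hcS hN).2 T hTN hTfin
    exact ⟨K, hTK, hKN.trans (Set.subset_sUnion_of_mem hN), hKsub, hKfin⟩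
  obtain ⟨N, hN⟩ := zorn_subset_nonempty S hzorn _ htriv
  exact ⟨N, hN.2.1, fun K hK hNK => (hN.2.2 hK hNK).antisymm hNK⟩

end PaperPG
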